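/- arXiv:1412.5786 — 3 statements merged into one kernel-verified Lean document; each statement's English description precedes it below -/
import Mathlib

section
/- Interpolation estimates for the decay norm: for every s ≥ s₀ > (d+1)/2 there exist constants C(s) ≥ C(s₀) ≥ 1, depending only on s, s₀ and d, such that for all matrices A, B indexed by I with finite decay norms, and all vectors v indexed by I: (i) |AB|_s ≤ C(s)|A|_{s₀}|B|_s + C(s₀)|A|_s|B|_{s₀}; (ii) |AB|_s ≤ C(s)|A|_s|B|_s; (iii) ‖Av‖_s ≤ C(s)(|A|_{s₀}‖v‖_s + |A|_s‖v‖_{s₀}). -/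
open scoped ENNReal NNReal

/-- Column index `k = (j,ℓ) ∈ ℤ_{≥0} × ℤᵈ`. -/
abbrev KI (d : ℕ) := ℕ × (Fin d → ℤ)

/-- Full index `i = (σ,k) ∈ {−1,+1} × ℤ_{≥0} × ℤᵈ` (`Bool` encodes `{−1,+1}`). -/
abbrev II (d : ℕ) := Bool × KI d

/-- Difference of two indices, in `ℤ × ℤᵈ`. -/
def ksub {d : ℕ} (k k' : KI d) : ℤ × (Fin d → ℤ) := ((k.1 : ℤ) - (k'.1 : ℤ), k.2 - k'.2)

/-- The weight `⟨h⟩ = max(1,|h|)` (`|·|` the sup norm) of `h ∈ ℤ × ℤᵈ`. -/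
noncomputable def hwt {d : ℕ} (h : ℤ × (Fin d → ℤ)) : ℝ≥0∞ :=
  ((max 1 (max h.1.natAbs (Finset.univ.sup fun i => (h.2 i).natAbs)) : ℕ) : ℝ≥0∞)

/-- The weight `⟨k⟩ = max(1,|k|)` of `k ∈ ℤ_{≥0} × ℤᵈ`. -/
noncomputable def kwt {d : ℕ} (k : KI d) : ℝ≥0∞ :=
  ((max 1 (max k.1 (Finset.univ.sup fun i => (k.2 i).natAbs)) : ℕ) : ℝ≥0∞)

/-- The `s`-decay norm of an infinite matrix indexed by `I`. -/
noncomputable def dnorm (d : ℕ) (s : ℝ) (A : II d → II d → ℂ) : ℝ≥0∞ :=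
  (⨆ σ : Bool, ⨆ σ' : Bool,
    ∑' h : ℤ × (Fin d → ℤ),
      hwt h ^ (2 * s) *
        (⨆ p : {q : KI d × KI d // ksub q.1 q.2 = h},
          (‖A (σ, (p : KI d × KI d).1) (σ', (p : KI d × KI d).2)‖₊ : ℝ≥0∞)) ^ (2 : ℕ)) ^
    (1 / 2 : ℝ)

/-- The weighted `ℓ²` norm of a vector indexed by `I`. -/
noncomputable def vnorm (d : ℕ) (s : ℝ) (v : II d → ℂ) : ℝ≥0∞ :=
  (⨆ σ : Bool, ∑' k : KI d, kwt k ^ (2 * s) * (‖v (σ, k)‖₊ : ℝ≥0∞) ^ (2 : ℕ)) ^ (1 / 2 : ℝ)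

/-- Matrix product `(AB)_i^{i''} = Σ_{i'} A_i^{i'} B_{i'}^{i''}`. -/
noncomputable def mprod {d : ℕ} (A B : II d → II d → ℂ) : II d → II d → ℂ :=
  fun i i'' => ∑' i' : II d, A i i' * B i' i''

/-- Matrix-vector product `(Av)_i = Σ_{i'} A_i^{i'} v_{i'}`. -/
noncomputable def mvec {d : ℕ} (A : II d → II d → ℂ) (v : II d → ℂ) : II d → ℂ :=
  fun i => ∑' i' : II d, A i i' * v i'

/-!
Each entry of `AB` (resp. `Av`) is bounded by a convolution of the decay profiles
`h ↦ sup_{k - k' = h} |A_k^{k'}|` (resp. of the profile of `A` with `|v|`). Since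
`⟨h⟩ ≤ ⟨h - h'⟩ + ⟨h'⟩`, the weight `⟨h⟩^s` can be moved onto either factor of the convolution at
the cost of `2^s`, and each of the two resulting terms is estimated by Young's inequality
`‖F * G‖_{ℓ²} ≤ ‖F‖_{ℓ¹} ‖G‖_{ℓ²}`. The `ℓ¹` norm of the unweighted factor is controlled by its
`s₀`-weighted `ℓ²` norm via Cauchy–Schwarz, at the cost of `(∑_h ⟨h⟩^{-2s₀})^{1/2}`, which is finite
because `2s₀ > d + 1`.
-/

open Function MeasureTheory

namespace DecayNorm

section Ell2

variable {ι : Type*}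

noncomputable def ell2 (f : ι → ℝ≥0∞) : ℝ≥0∞ := (∑' i, f i ^ 2) ^ (1 / 2 : ℝ)

lemma ell2_sq (f : ι → ℝ≥0∞) : ell2 f ^ 2 = ∑' i, f i ^ 2 := by
  rw [ell2, ← ENNReal.rpow_natCast, ← ENNReal.rpow_mul]; norm_num

lemma ell2_le_iff {f : ι → ℝ≥0∞} {c : ℝ≥0∞} : ell2 f ≤ c ↔ ∑' i, f i ^ 2 ≤ c ^ 2 := by
  rw [← ell2_sq, ENNReal.pow_le_pow_left_iff two_ne_zero]

lemma ell2_mono {f g : ι → ℝ≥0∞} (h : ∀ i, f i ≤ g i) : ell2 f ≤ ell2 g :=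
  ell2_le_iff.2 <| (ell2_sq g).symm ▸ ENNReal.tsum_le_tsum fun i => pow_le_pow_left' (h i) 2

lemma ell2_const_mul (c : ℝ≥0∞) (f : ι → ℝ≥0∞) : ell2 (fun i => c * f i) = c * ell2 f := by
  simp only [ell2, mul_pow, ENNReal.tsum_mul_left]
  rw [ENNReal.mul_rpow_of_nonneg _ _ (by norm_num), ← ENNReal.rpow_natCast, ← ENNReal.rpow_mul]
  norm_num

lemma ell2_add_le (f g : ι → ℝ≥0∞) : ell2 (f + g) ≤ ell2 f + ell2 g := by
  let _ : MeasurableSpace ι := ⊤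
  have h := ENNReal.lintegral_Lp_add_le (μ := Measure.count) (p := 2)
    measurable_from_top.aemeasurable measurable_from_top.aemeasurable one_le_two (f := f) (g := g)
  simpa only [lintegral_count' measurable_from_top, ell2, ← ENNReal.rpow_natCast,
    Nat.cast_ofNat] using h

lemma ell2_tsum_bool_le (f : Bool → ι → ℝ≥0∞) :
    ell2 (fun i => ∑' b, f b i) ≤ ∑' b, ell2 (f b) := by
  simp only [tsum_bool]; exact ell2_add_le _ _

lemma tsum_mul_le_ell2_mul_ell2 (f g : ι → ℝ≥0∞) : ∑' i, f i * g i ≤ ell2 f * ell2 g := by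
  let _ : MeasurableSpace ι := ⊤
  have h := ENNReal.lintegral_mul_le_Lp_mul_Lq Measure.count Real.HolderConjugate.two_two
    measurable_from_top.aemeasurable measurable_from_top.aemeasurable (f := f) (g := g)
  simpa only [lintegral_count' measurable_from_top, ell2, ← ENNReal.rpow_natCast,
    Nat.cast_ofNat, Pi.mul_apply] using h

lemma sq_tsum_mul_le (w f : ι → ℝ≥0∞) :
    (∑' i, w i * f i) ^ 2 ≤ (∑' i, w i) * ∑' i, w i * f i ^ 2 := by
  have hw : ∀ i, w i = w i ^ (1 / 2 : ℝ) * w i ^ (1 / 2 : ℝ) := fun i => by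
    rw [← ENNReal.rpow_add_of_nonneg _ _ (by norm_num) (by norm_num)]; norm_num
  have hsq : ∀ i, (w i ^ (1 / 2 : ℝ)) ^ 2 = w i := fun i => by
    rw [← ENNReal.rpow_natCast, ← ENNReal.rpow_mul]; norm_num
  calc (∑' i, w i * f i) ^ 2
      = (∑' i, w i ^ (1 / 2 : ℝ) * (w i ^ (1 / 2 : ℝ) * f i)) ^ 2 := by
        simp_rw [← mul_assoc, ← hw]
    _ ≤ (ell2 fun i => w i ^ (1 / 2 : ℝ)) ^ 2 * (ell2 fun i => w i ^ (1 / 2 : ℝ) * f i) ^ 2 := by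
        rw [← mul_pow]; exact pow_le_pow_left' (tsum_mul_le_ell2_mul_ell2 _ _) 2
    _ = (∑' i, w i) * ∑' i, w i * f i ^ 2 := by simp only [ell2_sq, mul_pow, hsq]

lemma tsum_le_ell2_rpow_neg_mul_ell2 (w u : ι → ℝ≥0∞) (hw₀ : ∀ i, w i ≠ 0) (hw : ∀ i, w i ≠ ⊤)
    (t : ℝ) : ∑' i, u i ≤ ell2 (fun i => w i ^ (-t)) * ell2 (fun i => w i ^ t * u i) := by
  have hu : ∀ i, u i = w i ^ (-t) * (w i ^ t * u i) := fun i => by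
    rw [← mul_assoc, ← ENNReal.rpow_add _ _ (hw₀ i) (hw i), neg_add_cancel, ENNReal.rpow_zero,
      one_mul]
  simpa only [← hu] using tsum_mul_le_ell2_mul_ell2 (fun i => w i ^ (-t)) (fun i => w i ^ t * u i)

end Ell2

lemma rpow_le_two_rpow_mul_add {s : ℝ} (hs : 0 ≤ s) {a b c : ℝ≥0∞} (h : a ≤ b + c) :
    a ^ s ≤ 2 ^ s * (b ^ s + c ^ s) := by
  have hmax : a ≤ 2 * max b c :=
    h.trans <| two_mul (max b c) ▸ add_le_add (le_max_left _ _) (le_max_right _ _)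
  calc a ^ s ≤ 2 ^ s * max b c ^ s := by
        rw [← ENNReal.mul_rpow_of_nonneg _ _ hs]; gcongr
    _ ≤ 2 ^ s * (b ^ s + c ^ s) := by
        gcongr
        rcases le_total b c with hbc | hbc
        · rw [max_eq_right hbc]; exact le_add_self
        · rw [max_eq_left hbc]; exact le_self_add

section Convolution

variable {α β γ : Type*} (φ : α → β → γ)

lemma ell2_conv_le_tsum_mul_ell2 (hφ₁ : ∀ b, Injective (φ · b)) (hφ₂ : ∀ a, Injective (φ a))
    (F : γ → ℝ≥0∞) (G : β → ℝ≥0∞) :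
    ell2 (fun a => ∑' b, F (φ a b) * G b) ≤ (∑' c, F c) * ell2 G := by
  rw [ell2_le_iff, mul_pow, ell2_sq, pow_two, mul_assoc, ← ENNReal.tsum_mul_left]
  calc ∑' a, (∑' b, F (φ a b) * G b) ^ 2
      ≤ ∑' a, (∑' c, F c) * ∑' b, F (φ a b) * G b ^ 2 := ENNReal.tsum_le_tsum fun a =>
        (sq_tsum_mul_le _ _).trans <|
          mul_le_mul_left (ENNReal.tsum_comp_le_tsum_of_injective (hφ₂ a) F) _
    _ = (∑' c, F c) * ∑' b, (∑' a, F (φ a b)) * G b ^ 2 := by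
        rw [ENNReal.tsum_mul_left, ENNReal.tsum_comm]; simp only [ENNReal.tsum_mul_right]
    _ ≤ (∑' c, F c) * ∑' b, (∑' c, F c) * G b ^ 2 := by
        gcongr with b
        exact ENNReal.tsum_comp_le_tsum_of_injective (hφ₁ b) F

lemma ell2_conv_le_ell2_mul_tsum (hφ₁ : ∀ b, Injective (φ · b)) (F : γ → ℝ≥0∞) (G : β → ℝ≥0∞) :
    ell2 (fun a => ∑' b, F (φ a b) * G b) ≤ ell2 F * ∑' b, G b := by
  rw [ell2_le_iff, mul_pow, ell2_sq, pow_two (∑' b, G b), ← mul_assoc]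
  calc ∑' a, (∑' b, F (φ a b) * G b) ^ 2
      ≤ ∑' a, (∑' b, G b) * ∑' b, G b * F (φ a b) ^ 2 := ENNReal.tsum_le_tsum fun a => by
        simpa only [mul_comm (G _)] using sq_tsum_mul_le G (fun b => F (φ a b))
    _ = (∑' b, G b) * ∑' b, G b * ∑' a, F (φ a b) ^ 2 := by
        rw [ENNReal.tsum_mul_left, ENNReal.tsum_comm]; simp only [ENNReal.tsum_mul_left]
    _ ≤ (∑' b, G b) * ∑' b, G b * ∑' c, F c ^ 2 := by
        gcongr with b
        exact ENNReal.tsum_comp_le_tsum_of_injective (hφ₁ b) (F · ^ 2)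
    _ = (∑' c, F c ^ 2) * (∑' b, G b) * ∑' b, G b := by
        rw [ENNReal.tsum_mul_right]; ring

lemma ell2_weight_mul_conv_le (hφ₁ : ∀ b, Injective (φ · b)) (hφ₂ : ∀ a, Injective (φ a))
    {wα : α → ℝ≥0∞} {wβ : β → ℝ≥0∞} {wγ : γ → ℝ≥0∞} (hw : ∀ a b, wα a ≤ wγ (φ a b) + wβ b)
    {s : ℝ} (hs : 0 ≤ s) (F : γ → ℝ≥0∞) (G : β → ℝ≥0∞) :
    ell2 (fun a => wα a ^ s * ∑' b, F (φ a b) * G b) ≤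
      2 ^ s * (ell2 (fun c => wγ c ^ s * F c) * ∑' b, G b +
        (∑' c, F c) * ell2 (fun b => wβ b ^ s * G b)) := by
  have hsplit : ∀ a, wα a ^ s * ∑' b, F (φ a b) * G b ≤
      2 ^ s * (∑' b, wγ (φ a b) ^ s * F (φ a b) * G b + ∑' b, F (φ a b) * (wβ b ^ s * G b)) := by
    intro a
    rw [← ENNReal.tsum_add, ← ENNReal.tsum_mul_left, ← ENNReal.tsum_mul_left]
    refine ENNReal.tsum_le_tsum fun b => ?_
    calc wα a ^ s * (F (φ a b) * G b)
        ≤ 2 ^ s * (wγ (φ a b) ^ s + wβ b ^ s) * (F (φ a b) * G b) := by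
          gcongr; exact rpow_le_two_rpow_mul_add hs (hw a b)
      _ = _ := by ring
  calc _ ≤ ell2 (fun a => 2 ^ s * (∑' b, wγ (φ a b) ^ s * F (φ a b) * G b +
          ∑' b, F (φ a b) * (wβ b ^ s * G b))) := ell2_mono hsplit
    _ ≤ 2 ^ s * (ell2 (fun a => ∑' b, wγ (φ a b) ^ s * F (φ a b) * G b) +
          ell2 (fun a => ∑' b, F (φ a b) * (wβ b ^ s * G b))) := by
        rw [ell2_const_mul]; gcongr; exact ell2_add_le _ _
    _ ≤ _ := by
        gcongr
        · exact ell2_conv_le_ell2_mul_tsum φ hφ₁ (fun c => wγ c ^ s * F c) G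
        · exact ell2_conv_le_tsum_mul_ell2 φ hφ₁ hφ₂ F (fun b => wβ b ^ s * G b)

end Convolution

lemma rpow_half_iSup {ι : Sort*} (f : ι → ℝ≥0∞) :
    (⨆ i, f i) ^ (1 / 2 : ℝ) = ⨆ i, f i ^ (1 / 2 : ℝ) :=
  (ENNReal.orderIsoRpow (1 / 2) (by norm_num)).map_iSup f

lemma sq_rpow_mul (x y : ℝ≥0∞) (s : ℝ) : (x ^ s * y) ^ 2 = x ^ (2 * s) * y ^ 2 := by
  rw [mul_pow, ← ENNReal.rpow_natCast (x ^ s), ← ENNReal.rpow_mul, Nat.cast_ofNat, mul_comm s]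

lemma max_one_nnnorm_add_le {E : Type*} [SeminormedAddCommGroup E] (x y : E) :
    max 1 ‖x + y‖₊ ≤ max 1 ‖x‖₊ + max 1 ‖y‖₊ :=
  max_le (le_add_right (le_max_left _ _))
    ((nnnorm_add_le x y).trans (add_le_add (le_max_right _ _) (le_max_right _ _)))

lemma rpow_neg_le_rpow_neg {x y : ℝ≥0∞} (h : x ≤ y) {q : ℝ} (hq : 0 ≤ q) :
    y ^ (-q) ≤ x ^ (-q) := by
  rw [ENNReal.rpow_neg, ENNReal.rpow_neg]; gcongr

lemma tsum_max_one_nnnorm_int_rpow_neg_lt_top {q : ℝ} (hq : 1 < q) :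
    ∑' z : ℤ, ((max 1 ‖z‖₊ : ℝ≥0) : ℝ≥0∞) ^ (-q) < ⊤ := by
  rw [ENNReal.tsum_eq_add_tsum_ite 0]
  refine ENNReal.add_lt_top.2 ⟨by simp, (ENNReal.tsum_le_tsum fun z => ?_).trans_lt
    (ENNReal.ofReal_tsum_of_nonneg (fun _ => by positivity) (Real.summable_abs_int_rpow hq) ▸
      ENNReal.ofReal_lt_top)⟩
  split_ifs with hz
  · exact zero_le
  have h1 : (1 : ℝ≥0) ≤ ‖z‖₊ := by
    rw [← NNReal.coe_le_coe, coe_nnnorm, Int.norm_eq_abs, NNReal.coe_one, ← Int.cast_abs]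
    exact_mod_cast Int.one_le_abs hz
  rw [max_eq_right h1, ← ENNReal.ofReal_coe_nnreal, coe_nnnorm, Int.norm_eq_abs,
    ENNReal.ofReal_rpow_of_pos (by positivity)]

lemma tsum_fin_pi_prod {α : Type*} (g : α → ℝ≥0∞) (m : ℕ) :
    ∑' x : Fin m → α, ∏ i, g (x i) = (∑' a, g a) ^ m := by
  induction m with
  | zero => simp [tsum_fintype]
  | succ m ih =>
    rw [← (Fin.consEquiv fun _ => α).tsum_eq, ENNReal.tsum_prod', pow_succ', ← ih,
      ← ENNReal.tsum_mul_right]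
    refine tsum_congr fun a => ?_
    rw [← ENNReal.tsum_mul_left]
    simp [Fin.consEquiv, Fin.prod_univ_succ]

section Lattice

variable {d : ℕ}

lemma hwt_eq_max_one_nnnorm (h : ℤ × (Fin d → ℤ)) : hwt h = ((max 1 ‖h‖₊ : ℝ≥0) : ℝ≥0∞) := by
  have hnorm : ((max h.1.natAbs (Finset.univ.sup fun i => (h.2 i).natAbs) : ℕ) : ℝ≥0) = ‖h‖₊ := by
    simp [Prod.nnnorm_def, Pi.nnnorm_def, NNReal.natCast_natAbs, Nat.cast_finsetSup]
  rw [hwt, ← hnorm, ← ENNReal.coe_natCast, Nat.cast_max, Nat.cast_one]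

lemma one_le_hwt (h : ℤ × (Fin d → ℤ)) : 1 ≤ hwt h := by
  rw [hwt_eq_max_one_nnnorm]; exact_mod_cast le_max_left _ _

lemma hwt_ne_top (h : ℤ × (Fin d → ℤ)) : hwt h ≠ ⊤ := by
  rw [hwt_eq_max_one_nnnorm]; exact ENNReal.coe_ne_top

lemma hwt_ne_zero (h : ℤ × (Fin d → ℤ)) : hwt h ≠ 0 :=
  (zero_lt_one.trans_le (one_le_hwt h)).ne'

lemma hwt_zero : hwt (0 : ℤ × (Fin d → ℤ)) = 1 := by
  simp [hwt_eq_max_one_nnnorm]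

lemma hwt_add_le (x y : ℤ × (Fin d → ℤ)) : hwt (x + y) ≤ hwt x + hwt y := by
  simp only [hwt_eq_max_one_nnnorm]; exact_mod_cast max_one_nnnorm_add_le x y

def toLattice (k : KI d) : ℤ × (Fin d → ℤ) := ((k.1 : ℤ), k.2)

lemma toLattice_injective : Injective (toLattice (d := d)) := fun k k' h => by
  simp only [toLattice, Prod.mk.injEq, Nat.cast_inj] at h
  exact Prod.ext h.1 h.2

lemma kwt_eq_hwt_toLattice (k : KI d) : kwt k = hwt (toLattice k) := by
  simp [kwt, hwt, toLattice]

lemma ksub_eq_sub (k k' : KI d) : ksub k k' = toLattice k - toLattice k' := rfl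

lemma kwt_le_hwt_ksub_add_kwt (k k' : KI d) : kwt k ≤ hwt (ksub k k') + kwt k' := by
  simpa only [kwt_eq_hwt_toLattice, ksub_eq_sub, sub_add_cancel] using
    hwt_add_le (ksub k k') (toLattice k')

lemma ksub_left_injective (k' : KI d) : Injective (ksub · k') :=
  fun _ _ h => toLattice_injective (sub_left_injective (b := toLattice k') h)

lemma ksub_right_injective (k : KI d) : Injective (ksub k) :=
  fun _ _ h => toLattice_injective (sub_right_injective (b := toLattice k) h)

lemma hwt_rpow_neg_le_prod {q : ℝ} (hq : 0 ≤ q) (h : ℤ × (Fin d → ℤ)) :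
    hwt h ^ (-(q * (d + 1))) ≤
      ((max 1 ‖h.1‖₊ : ℝ≥0) : ℝ≥0∞) ^ (-q) * ∏ i, ((max 1 ‖h.2 i‖₊ : ℝ≥0) : ℝ≥0∞) ^ (-q) := by
  have hcoord : ∀ z : ℤ, ‖z‖₊ ≤ ‖h‖₊ → hwt h ^ (-q) ≤ ((max 1 ‖z‖₊ : ℝ≥0) : ℝ≥0∞) ^ (-q) :=
    fun z hz => rpow_neg_le_rpow_neg (by rw [hwt_eq_max_one_nnnorm]; gcongr) hq
  calc hwt h ^ (-(q * (d + 1))) = hwt h ^ (-q) * ∏ _i : Fin d, hwt h ^ (-q) := by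
        rw [Finset.prod_const, Finset.card_univ, Fintype.card_fin, ← pow_succ',
          ← ENNReal.rpow_natCast, ← ENNReal.rpow_mul]
        push_cast; ring_nf
    _ ≤ _ := mul_le_mul' (hcoord _ (NNReal.coe_le_coe.1 (norm_fst_le h))) <|
      Finset.prod_le_prod' fun i _ =>
        hcoord _ ((nnnorm_le_pi_nnnorm h.2 i).trans (NNReal.coe_le_coe.1 (norm_snd_le h)))

lemma tsum_hwt_rpow_neg_lt_top {t : ℝ} (ht : d + 1 < t) :
    ∑' h : ℤ × (Fin d → ℤ), hwt h ^ (-t) < ⊤ := by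
  set q := t / (d + 1)
  have hd : (0 : ℝ) < d + 1 := by positivity
  have hq : 1 < q := (one_lt_div hd).2 ht
  have htq : t = q * (d + 1) := (div_mul_cancel₀ t hd.ne').symm
  set S := ∑' z : ℤ, ((max 1 ‖z‖₊ : ℝ≥0) : ℝ≥0∞) ^ (-q)
  calc ∑' h : ℤ × (Fin d → ℤ), hwt h ^ (-t)
      ≤ ∑' h : ℤ × (Fin d → ℤ), ((max 1 ‖h.1‖₊ : ℝ≥0) : ℝ≥0∞) ^ (-q) *
          ∏ i, ((max 1 ‖h.2 i‖₊ : ℝ≥0) : ℝ≥0∞) ^ (-q) :=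
        ENNReal.tsum_le_tsum fun h => htq ▸ hwt_rpow_neg_le_prod (by linarith) h
    _ = S * S ^ d := by
        simp only [ENNReal.tsum_prod', ENNReal.tsum_mul_left, ENNReal.tsum_mul_right]
        exact congrArg _ (tsum_fin_pi_prod (fun z : ℤ => ((max 1 ‖z‖₊ : ℝ≥0) : ℝ≥0∞) ^ (-q)) d)
    _ < ⊤ := by
        have hS := tsum_max_one_nnnorm_int_rpow_neg_lt_top hq
        exact ENNReal.mul_lt_top hS (ENNReal.pow_lt_top hS)

lemma kwt_ne_zero (k : KI d) : kwt k ≠ 0 := kwt_eq_hwt_toLattice k ▸ hwt_ne_zero _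

lemma kwt_ne_top (k : KI d) : kwt k ≠ ⊤ := kwt_eq_hwt_toLattice k ▸ hwt_ne_top _

noncomputable def ell2InvWeight (d : ℕ) (s₀ : ℝ) : ℝ≥0∞ :=
  ell2 (fun h : ℤ × (Fin d → ℤ) => hwt h ^ (-s₀))

lemma ell2InvWeight_lt_top {s₀ : ℝ} (hs₀ : ((d : ℝ) + 1) / 2 < s₀) :
    ell2InvWeight d s₀ < ⊤ := by
  have hsq : ∀ h : ℤ × (Fin d → ℤ), (hwt h ^ (-s₀)) ^ 2 = hwt h ^ (-(2 * s₀)) := fun h => by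
    rw [← ENNReal.rpow_natCast, ← ENNReal.rpow_mul]; ring_nf
  simp only [ell2InvWeight, ell2, hsq]
  exact ENNReal.rpow_lt_top_of_nonneg (by norm_num) (tsum_hwt_rpow_neg_lt_top (by linarith)).ne

lemma one_le_ell2InvWeight (s₀ : ℝ) : 1 ≤ ell2InvWeight d s₀ := by
  rw [ell2InvWeight, ← ENNReal.pow_le_pow_left_iff two_ne_zero, one_pow, ell2_sq]
  exact le_of_eq_of_le (by simp [hwt_zero]) (ENNReal.le_tsum 0)

lemma ell2_kwt_rpow_neg_le (s₀ : ℝ) :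
    ell2 (fun k : KI d => kwt k ^ (-s₀)) ≤ ell2InvWeight d s₀ := by
  rw [ell2InvWeight, ell2_le_iff, ell2_sq]
  simp only [kwt_eq_hwt_toLattice]
  exact ENNReal.tsum_comp_le_tsum_of_injective toLattice_injective (fun h => (hwt h ^ (-s₀)) ^ 2)

noncomputable def decayCoeff (A : II d → II d → ℂ) (σ σ' : Bool) (h : ℤ × (Fin d → ℤ)) :
    ℝ≥0∞ :=
  ⨆ p : {q : KI d × KI d // ksub q.1 q.2 = h},
    (‖A (σ, (p : KI d × KI d).1) (σ', (p : KI d × KI d).2)‖₊ : ℝ≥0∞)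

lemma dnorm_eq_iSup_ell2 (s : ℝ) (A : II d → II d → ℂ) :
    dnorm d s A = ⨆ σ, ⨆ σ', ell2 (fun h => hwt h ^ s * decayCoeff A σ σ' h) := by
  simp only [dnorm, ell2, decayCoeff, sq_rpow_mul, rpow_half_iSup]

lemma vnorm_eq_iSup_ell2 (s : ℝ) (v : II d → ℂ) :
    vnorm d s v = ⨆ σ, ell2 (fun k => kwt k ^ s * (‖v (σ, k)‖₊ : ℝ≥0∞)) := by
  simp only [vnorm, ell2, sq_rpow_mul, rpow_half_iSup]

lemma ell2_le_dnorm (s : ℝ) (A : II d → II d → ℂ) (σ σ' : Bool) :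
    ell2 (fun h => hwt h ^ s * decayCoeff A σ σ' h) ≤ dnorm d s A := by
  rw [dnorm_eq_iSup_ell2]; exact le_iSup₂_of_le σ σ' le_rfl

lemma ell2_le_vnorm (s : ℝ) (v : II d → ℂ) (σ : Bool) :
    ell2 (fun k => kwt k ^ s * (‖v (σ, k)‖₊ : ℝ≥0∞)) ≤ vnorm d s v := by
  rw [vnorm_eq_iSup_ell2]; exact le_iSup_of_le σ le_rfl

lemma dnorm_mono {s₀ s : ℝ} (hs : s₀ ≤ s) (A : II d → II d → ℂ) : dnorm d s₀ A ≤ dnorm d s A := by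
  simp only [dnorm_eq_iSup_ell2]
  exact iSup₂_mono fun σ σ' => ell2_mono fun h =>
    mul_le_mul_left (ENNReal.rpow_le_rpow_of_exponent_le (one_le_hwt h) hs) _

lemma tsum_decayCoeff_le_mul_dnorm (s₀ : ℝ) (A : II d → II d → ℂ) (σ σ' : Bool) :
    ∑' h, decayCoeff A σ σ' h ≤ ell2InvWeight d s₀ * dnorm d s₀ A :=
  (tsum_le_ell2_rpow_neg_mul_ell2 hwt _ hwt_ne_zero hwt_ne_top s₀).trans
    (mul_le_mul_right (ell2_le_dnorm s₀ A σ σ') (ell2InvWeight d s₀))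

lemma tsum_nnnorm_le_mul_vnorm (s₀ : ℝ) (v : II d → ℂ) (σ : Bool) :
    ∑' k, (‖v (σ, k)‖₊ : ℝ≥0∞) ≤ ell2InvWeight d s₀ * vnorm d s₀ v :=
  (tsum_le_ell2_rpow_neg_mul_ell2 kwt _ kwt_ne_zero kwt_ne_top s₀).trans
    (mul_le_mul' (ell2_kwt_rpow_neg_le s₀) (ell2_le_vnorm s₀ v σ))

lemma nnnorm_le_decayCoeff (A : II d → II d → ℂ) (σ σ' : Bool) (k k' : KI d) :
    (‖A (σ, k) (σ', k')‖₊ : ℝ≥0∞) ≤ decayCoeff A σ σ' (ksub k k') :=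
  le_iSup_of_le ⟨(k, k'), rfl⟩ le_rfl

lemma nnnorm_tsum_mul_le (a x : II d → ℂ) :
    (‖∑' i, a i * x i‖₊ : ℝ≥0∞) ≤ ∑' σ, ∑' k, (‖a (σ, k)‖₊ : ℝ≥0∞) * ‖x (σ, k)‖₊ := by
  simpa only [enorm_eq_nnnorm, nnnorm_mul, ENNReal.coe_mul, ENNReal.tsum_prod'] using
    enorm_tsum_le_tsum_enorm (f := fun i => a i * x i)

lemma decayCoeff_mprod_le (A B : II d → II d → ℂ) (σ σ'' : Bool) (h : ℤ × (Fin d → ℤ)) :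
    decayCoeff (mprod A B) σ σ'' h ≤
      ∑' σ', ∑' h', decayCoeff B σ' σ'' (h - h') * decayCoeff A σ σ' h' := by
  refine iSup_le fun ⟨(k, k''), hkk''⟩ => (nnnorm_tsum_mul_le _ _).trans <|
    ENNReal.tsum_le_tsum fun σ' => ?_
  have hsub : ∀ k', h - ksub k k' = ksub k' k'' := fun k' => by
    rw [← hkk'']; simp only [ksub_eq_sub]; abel
  calc ∑' k', (‖A (σ, k) (σ', k')‖₊ : ℝ≥0∞) * ‖B (σ', k') (σ'', k'')‖₊
      ≤ ∑' k', decayCoeff B σ' σ'' (h - ksub k k') * decayCoeff A σ σ' (ksub k k') :=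
        ENNReal.tsum_le_tsum fun k' => by
          rw [mul_comm, hsub]
          exact mul_le_mul' (nnnorm_le_decayCoeff B σ' σ'' k' k'')
            (nnnorm_le_decayCoeff A σ σ' k k')
    _ ≤ _ := ENNReal.tsum_comp_le_tsum_of_injective (ksub_right_injective k)
        (fun h' => decayCoeff B σ' σ'' (h - h') * decayCoeff A σ σ' h')

lemma nnnorm_mvec_le (A : II d → II d → ℂ) (v : II d → ℂ) (σ : Bool) (k : KI d) :
    (‖mvec A v (σ, k)‖₊ : ℝ≥0∞) ≤
      ∑' σ', ∑' k', decayCoeff A σ σ' (ksub k k') * ‖v (σ', k')‖₊ :=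
  (nnnorm_tsum_mul_le _ _).trans <| ENNReal.tsum_le_tsum fun σ' => ENNReal.tsum_le_tsum fun k' =>
    mul_le_mul_left (nnnorm_le_decayCoeff A σ σ' k k') _

lemma dnorm_mprod_le {s : ℝ} (hs : 0 ≤ s) (s₀ : ℝ) (A B : II d → II d → ℂ) :
    dnorm d s (mprod A B) ≤ 2 * 2 ^ s * ell2InvWeight d s₀ *
      (dnorm d s₀ A * dnorm d s B + dnorm d s A * dnorm d s₀ B) := by
  set K := ell2InvWeight d s₀
  have hw : ∀ h h' : ℤ × (Fin d → ℤ), hwt h ≤ hwt (h - h') + hwt h' := fun h h' => by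
    simpa only [sub_add_cancel] using hwt_add_le (h - h') h'
  rw [dnorm_eq_iSup_ell2]
  refine iSup₂_le fun σ σ'' => ?_
  calc ell2 (fun h => hwt h ^ s * decayCoeff (mprod A B) σ σ'' h)
      ≤ ell2 (fun h => ∑' σ', hwt h ^ s *
          ∑' h', decayCoeff B σ' σ'' (h - h') * decayCoeff A σ σ' h') :=
        ell2_mono fun h => by
          rw [ENNReal.tsum_mul_left]; gcongr; exact decayCoeff_mprod_le A B σ σ'' h
    _ ≤ ∑' σ', ell2 (fun h => hwt h ^ s *
          ∑' h', decayCoeff B σ' σ'' (h - h') * decayCoeff A σ σ' h') := ell2_tsum_bool_le _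
    _ ≤ ∑' _σ' : Bool, 2 ^ s * K * (dnorm d s₀ A * dnorm d s B + dnorm d s A * dnorm d s₀ B) :=
        ENNReal.tsum_le_tsum fun σ' => by
          refine (ell2_weight_mul_conv_le (fun h h' => h - h') (fun _ => sub_left_injective)
            (fun _ => sub_right_injective) hw hs _ _).trans ?_
          calc _ ≤ 2 ^ s * (dnorm d s B * (K * dnorm d s₀ A) + K * dnorm d s₀ B * dnorm d s A) := by
                gcongr
                · exact ell2_le_dnorm s B σ' σ''
                · exact tsum_decayCoeff_le_mul_dnorm s₀ A σ σ'
                · exact tsum_decayCoeff_le_mul_dnorm s₀ B σ' σ''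
                · exact ell2_le_dnorm s A σ σ'
            _ = _ := by ring
    _ = _ := by rw [tsum_bool]; ring

lemma vnorm_mvec_le {s : ℝ} (hs : 0 ≤ s) (s₀ : ℝ) (A : II d → II d → ℂ) (v : II d → ℂ) :
    vnorm d s (mvec A v) ≤ 2 * 2 ^ s * ell2InvWeight d s₀ *
      (dnorm d s₀ A * vnorm d s v + dnorm d s A * vnorm d s₀ v) := by
  set K := ell2InvWeight d s₀
  rw [vnorm_eq_iSup_ell2]
  refine iSup_le fun σ => ?_
  calc ell2 (fun k => kwt k ^ s * (‖mvec A v (σ, k)‖₊ : ℝ≥0∞))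
      ≤ ell2 (fun k => ∑' σ', kwt k ^ s *
          ∑' k', decayCoeff A σ σ' (ksub k k') * ‖v (σ', k')‖₊) :=
        ell2_mono fun k => by
          rw [ENNReal.tsum_mul_left]; gcongr; exact nnnorm_mvec_le A v σ k
    _ ≤ ∑' σ', ell2 (fun k => kwt k ^ s *
          ∑' k', decayCoeff A σ σ' (ksub k k') * ‖v (σ', k')‖₊) := ell2_tsum_bool_le _
    _ ≤ ∑' _σ' : Bool, 2 ^ s * K * (dnorm d s₀ A * vnorm d s v + dnorm d s A * vnorm d s₀ v) :=
        ENNReal.tsum_le_tsum fun σ' => by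
          refine (ell2_weight_mul_conv_le ksub ksub_left_injective ksub_right_injective
            kwt_le_hwt_ksub_add_kwt hs _ _).trans ?_
          calc _ ≤ 2 ^ s * (dnorm d s A * (K * vnorm d s₀ v) + K * dnorm d s₀ A * vnorm d s v) := by
                gcongr
                · exact ell2_le_dnorm s A σ σ'
                · exact tsum_nnnorm_le_mul_vnorm s₀ v σ'
                · exact tsum_decayCoeff_le_mul_dnorm s₀ A σ σ'
                · exact ell2_le_vnorm s v σ'
            _ = _ := by ring
    _ = _ := by rw [tsum_bool]; ring

end Lattice

end DecayNorm

open DecayNorm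

theorem decay_norm_interpolation_general (d : ℕ) (s₀ s : ℝ)
    (hs₀ : ((d : ℝ) + 1) / 2 < s₀) (hs : s₀ ≤ s) :
    ∃ C₀ C : ℝ, 1 ≤ C₀ ∧ C₀ ≤ C ∧
      ∀ (A B : II d → II d → ℂ) (v : II d → ℂ),
        dnorm d s₀ A < ⊤ → dnorm d s A < ⊤ → dnorm d s₀ B < ⊤ → dnorm d s B < ⊤ →
        (∀ i i'' : II d, Summable fun i' : II d => A i i' * B i' i'') →
        (∀ i : II d, Summable fun i' : II d => A i i' * v i') →
        dnorm d s (mprod A B) ≤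
            ENNReal.ofReal C * dnorm d s₀ A * dnorm d s B +
              ENNReal.ofReal C₀ * dnorm d s A * dnorm d s₀ B ∧
        dnorm d s (mprod A B) ≤ ENNReal.ofReal C * dnorm d s A * dnorm d s B ∧
        vnorm d s (mvec A v) ≤
          ENNReal.ofReal C * (dnorm d s₀ A * vnorm d s v + dnorm d s A * vnorm d s₀ v) := by
  have hs_pos : 0 < s := by linarith [show (0 : ℝ) ≤ ((d : ℝ) + 1) / 2 by positivity]
  set Γ := 2 * 2 ^ s * ell2InvWeight d s₀
  have hΓ_top : Γ ≠ ⊤ := ENNReal.mul_ne_top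
    (ENNReal.mul_ne_top ENNReal.ofNat_ne_top (ENNReal.rpow_ne_top_of_nonneg hs_pos.le
      ENNReal.ofNat_ne_top)) (ell2InvWeight_lt_top hs₀).ne
  have h2Γ_top : 2 * Γ ≠ ⊤ := ENNReal.mul_ne_top ENNReal.ofNat_ne_top hΓ_top
  have hΓ_le : Γ ≤ 2 * Γ := le_mul_of_one_le_left' (by norm_num)
  have hΓ_one : 1 ≤ Γ := one_le_mul
    (one_le_mul (by norm_num) (ENNReal.one_le_rpow (by norm_num) hs_pos))
    (one_le_ell2InvWeight s₀)
  -- `C₀ = Γ`, `C = 2Γ`: the factor 2 pays for (ii), which is (i) combined with `|·|_{s₀} ≤ |·|_s`.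
  refine ⟨Γ.toReal, (2 * Γ).toReal, by simpa using ENNReal.toReal_mono hΓ_top hΓ_one,
    ENNReal.toReal_mono h2Γ_top hΓ_le, fun A B v _ _ _ _ _ _ => ?_⟩
  rw [ENNReal.ofReal_toReal hΓ_top, ENNReal.ofReal_toReal h2Γ_top]
  have hAB := dnorm_mprod_le hs_pos.le s₀ A B
  refine ⟨hAB.trans ?_, hAB.trans ?_, (vnorm_mvec_le hs_pos.le s₀ A v).trans (by gcongr)⟩
  · rw [mul_add, ← mul_assoc, ← mul_assoc]
    gcongr
  · calc Γ * (dnorm d s₀ A * dnorm d s B + dnorm d s A * dnorm d s₀ B)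
        ≤ Γ * (dnorm d s A * dnorm d s B + dnorm d s A * dnorm d s B) := by
          gcongr <;> exact dnorm_mono hs _
      _ = 2 * Γ * dnorm d s A * dnorm d s B := by ring

/-- Interpolation estimates for the decay norm: for `s ≥ s₀ > (d+1)/2` there are
constants `C(s) ≥ C(s₀) ≥ 1` such that `|AB|ₛ ≤ C(s)|A|_{s₀}|B|ₛ + C(s₀)|A|ₛ|B|_{s₀}`,
`|AB|ₛ ≤ C(s)|A|ₛ|B|ₛ` and `‖Av‖ₛ ≤ C(s)(|A|_{s₀}‖v‖ₛ + |A|ₛ‖v‖_{s₀})`. -/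
theorem decay_norm_interpolation (d : ℕ) (hd : 1 ≤ d) (s₀ s : ℝ)
    (hs₀ : ((d : ℝ) + 1) / 2 < s₀) (hs : s₀ ≤ s) :
    ∃ C₀ C : ℝ, 1 ≤ C₀ ∧ C₀ ≤ C ∧
      ∀ (A B : II d → II d → ℂ) (v : II d → ℂ),
        dnorm d s₀ A < ⊤ → dnorm d s A < ⊤ → dnorm d s₀ B < ⊤ → dnorm d s B < ⊤ →
        (∀ i i'' : II d, Summable fun i' : II d => A i i' * B i' i'') →
        (∀ i : II d, Summable fun i' : II d => A i i' * v i') →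
        dnorm d s (mprod A B) ≤
            ENNReal.ofReal C * dnorm d s₀ A * dnorm d s B +
              ENNReal.ofReal C₀ * dnorm d s A * dnorm d s₀ B ∧
        dnorm d s (mprod A B) ≤ ENNReal.ofReal C * dnorm d s A * dnorm d s B ∧
        vnorm d s (mvec A v) ≤
          ENNReal.ofReal C * (dnorm d s₀ A * vnorm d s v + dnorm d s A * vnorm d s₀ v) :=
  decay_norm_interpolation_general d s₀ s hs₀ hs
end

section
/- Measure estimate for a resonant set: there is an absolute constant C (one may take C = 37) with the following property. Let d ≥ 1, τ > 0, Λ ⊆ [1/2, 3/2] measurable, ω̄ ∈ ℝ^d, ℓ ∈ ℤ^d, σ, σ' ∈ {−1,+1} and j, j' ∈ ℤ_{≥0}; write D := σj² − σ'j'². Let m, ϱ, ϱ' : Λ → ℝ be Lipschitz functions and assume: (i) |D| ≤ 8|ω̄·ℓ|; (ii) Lip(m)·|D| + Lip(ϱ) + Lip(ϱ') ≤ |ω̄·ℓ|/72. Then for every γ̃ > 0 the resonant set R := { λ ∈ Λ : |i λ ω̄·ℓ − i m(λ) D + i(ϱ(λ) − ϱ'(λ))| < 2γ̃ |D| ⟨ℓ⟩^{−τ}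 } has Lebesgue measure |R| ≤ C γ̃ ⟨ℓ⟩^{−τ}. -/
open scoped ENNReal

/-- Measure estimate for a resonant set: if `|D| ≤ 8|ω̄·ℓ|` and the Lipschitz
constants satisfy `Lip(m)|D| + Lip(ϱ) + Lip(ϱ') ≤ |ω̄·ℓ|/72`, then the resonant set
`R = {λ ∈ Λ : |iλω̄·ℓ − i m(λ)D + i(ϱ(λ)−ϱ'(λ))| < 2γ̃|D|⟨ℓ⟩^{−τ}}` has Lebesgue
measure at most `37 γ̃ ⟨ℓ⟩^{−τ}`. -/
theorem resonant_set_measure (d : ℕ) (hd : 1 ≤ d) (τ : ℝ) (hτ : 0 < τ)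
    (Λ : Set ℝ) (hΛmeas : MeasurableSet Λ) (hΛ : Λ ⊆ Set.Icc (1 / 2 : ℝ) (3 / 2))
    (ωb : Fin d → ℝ) (ℓ : Fin d → ℤ)
    (σ σ' : ℤ) (hσ : σ = 1 ∨ σ = -1) (hσ' : σ' = 1 ∨ σ' = -1)
    (j j' : ℕ)
    (m ϱ ϱ' : ℝ → ℝ) (Km Kρ Kρ' : ℝ) (hKm : 0 ≤ Km) (hKρ : 0 ≤ Kρ) (hKρ' : 0 ≤ Kρ')
    (hm : ∀ l₁ ∈ Λ, ∀ l₂ ∈ Λ, |m l₁ - m l₂| ≤ Km * |l₁ - l₂|)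
    (hϱ : ∀ l₁ ∈ Λ, ∀ l₂ ∈ Λ, |ϱ l₁ - ϱ l₂| ≤ Kρ * |l₁ - l₂|)
    (hϱ' : ∀ l₁ ∈ Λ, ∀ l₂ ∈ Λ, |ϱ' l₁ - ϱ' l₂| ≤ Kρ' * |l₁ - l₂|)
    (hD : |(σ : ℝ) * (j : ℝ) ^ 2 - (σ' : ℝ) * (j' : ℝ) ^ 2| ≤
      8 * |∑ i, ωb i * (ℓ i : ℝ)|)
    (hLip : Km * |(σ : ℝ) * (j : ℝ) ^ 2 - (σ' : ℝ) * (j' : ℝ) ^ 2| + Kρ + Kρ' ≤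
      |∑ i, ωb i * (ℓ i : ℝ)| / 72)
    (γt : ℝ) (hγt : 0 < γt) :
    MeasureTheory.volume
      {l | l ∈ Λ ∧
        |l * (∑ i, ωb i * (ℓ i : ℝ)) -
            m l * ((σ : ℝ) * (j : ℝ) ^ 2 - (σ' : ℝ) * (j' : ℝ) ^ 2) +
            (ϱ l - ϱ' l)| <
          2 * γt * |(σ : ℝ) * (j : ℝ) ^ 2 - (σ' : ℝ) * (j' : ℝ) ^ 2| /
            ((max 1 (Finset.univ.sup fun i => (ℓ i).natAbs) : ℕ) : ℝ) ^ τ} ≤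
      ENNReal.ofReal
        (37 * γt / ((max 1 (Finset.univ.sup fun i => (ℓ i).natAbs) : ℕ) : ℝ) ^ τ) := by
  classical
  set W : ℝ := ∑ i, ωb i * (ℓ i : ℝ) with hWdef
  set D : ℝ := (σ : ℝ) * (j : ℝ) ^ 2 - (σ' : ℝ) * (j' : ℝ) ^ 2 with hDdef
  set n : ℕ := max 1 (Finset.univ.sup fun i => (ℓ i).natAbs) with hndef
  have hn1 : (1 : ℝ) ≤ (n : ℝ) := by exact_mod_cast Nat.one_le_iff_ne_zero.mpr (by positivity)
  have hP : (0 : ℝ) < (n : ℝ) ^ τ := Real.rpow_pos_of_pos (by linarith) τ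
  clear_value W D n
  rcases eq_or_ne W 0 with hW0 | hW0
  · -- degenerate case: W = 0 forces D = 0 and the set is empty
    have hDz : |D| = 0 := le_antisymm (by rw [hW0] at hD; simpa using hD) (abs_nonneg _)
    have hempty : {l | l ∈ Λ ∧ |l * W - m l * D + (ϱ l - ϱ' l)| <
        2 * γt * |D| / (n : ℝ) ^ τ} = ∅ := by
      ext l
      simp only [Set.mem_setOf_eq, Set.mem_empty_iff_false, iff_false, not_and]
      intro _ h
      rw [hDz, mul_zero, zero_div] at h
      exact absurd h (not_lt.mpr (abs_nonneg _))
    rw [hempty]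
    simp
  · have hWa : (0 : ℝ) < |W| := abs_pos.mpr hW0
    refine le_trans (Real.volume_le_diam _) (EMetric.diam_le ?_)
    intro a ha b hb
    obtain ⟨haΛ, hfa⟩ := ha
    obtain ⟨hbΛ, hfb⟩ := hb
    rw [edist_dist]
    apply ENNReal.ofReal_le_ofReal
    rw [Real.dist_eq, le_div_iff₀ hP]
    set A := |a * W - m a * D + (ϱ a - ϱ' a)| with hA
    set B := |b * W - m b * D + (ϱ b - ϱ' b)| with hB
    have hx0 : (0:ℝ) ≤ |a - b| := abs_nonneg _
    have tri : ∀ p q r s : ℝ, |p + q - r + s| ≤ |p| + |q| + |r| + |s| := by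
      intro p q r s
      refine abs_le.mpr ⟨?_, ?_⟩ <;>
        [ (nlinarith [neg_abs_le p, neg_abs_le q, neg_abs_le s, le_abs_self r]);
          (nlinarith [le_abs_self p, le_abs_self q, le_abs_self s, neg_abs_le r]) ]
    have habs : |a - b| * |W| ≤ A + B + Km * |D| * |a - b| + Kρ * |a - b| + Kρ' * |a - b| := by
      have e1 : (a - b) * W =
          ((a * W - m a * D + (ϱ a - ϱ' a)) - (b * W - m b * D + (ϱ b - ϱ' b)))
            + (m a - m b) * D - (ϱ a - ϱ b) + (ϱ' a - ϱ' b) := by ring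
      calc |a - b| * |W| = |(a - b) * W| := (abs_mul _ _).symm
        _ ≤ |(a * W - m a * D + (ϱ a - ϱ' a)) - (b * W - m b * D + (ϱ b - ϱ' b))|
              + |(m a - m b) * D| + |ϱ a - ϱ b| + |ϱ' a - ϱ' b| := by
            rw [e1]; exact tri _ _ _ _
        _ ≤ (A + B) + (Km * |a - b|) * |D| + Kρ * |a - b| + Kρ' * |a - b| := by
            gcongr
            · exact abs_sub _ _
            · rw [abs_mul]
              exact mul_le_mul_of_nonneg_right (hm a haΛ b hbΛ) (abs_nonneg _)
            · exact hϱ a haΛ b hbΛ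
            · exact hϱ' a haΛ b hbΛ
        _ = A + B + Km * |D| * |a - b| + Kρ * |a - b| + Kρ' * |a - b| := by ring
    have hLx : (Km * |D| + Kρ + Kρ') * |a - b| ≤ (|W| / 72) * |a - b| :=
      mul_le_mul_of_nonneg_right hLip hx0
    have hAP : A * (n : ℝ) ^ τ < 2 * γt * |D| := by
      have := (lt_div_iff₀ hP).mp hfa
      linarith
    have hBP : B * (n : ℝ) ^ τ < 2 * γt * |D| := by
      have := (lt_div_iff₀ hP).mp hfb
      linarith
    have hA0 : (0:ℝ) ≤ A := abs_nonneg _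
    have hB0 : (0:ℝ) ≤ B := abs_nonneg _
    have habsP : |a - b| * |W| * (n : ℝ) ^ τ ≤
        (A + B + Km * |D| * |a - b| + Kρ * |a - b| + Kρ' * |a - b|) * (n : ℝ) ^ τ :=
      mul_le_mul_of_nonneg_right habs hP.le
    have hLxP : (Km * |D| + Kρ + Kρ') * |a - b| * (n : ℝ) ^ τ ≤
        (|W| / 72) * |a - b| * (n : ℝ) ^ τ :=
      mul_le_mul_of_nonneg_right hLx hP.le
    have hDW : 2 * γt * |D| ≤ 16 * γt * |W| := by nlinarith
    have h5 : 71 * (|a - b| * (n : ℝ) ^ τ * |W|) ≤ 2304 * (γt * |W|) := by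
      linarith [habsP, hLxP, hAP, hBP, hDW]
    clear hm hϱ hϱ' hΛ hΛmeas hWdef hDdef hndef hA hB habs habsP hLx hLxP hfa hfb
    nlinarith [h5, hWa, hγt]
end

section
/- Localization of resonances: let d ≥ 1, τ > 0, 0 < γ̃ ≤ 1/24, Λ ⊆ [1/2, 3/2], ω̄ ∈ ℝ^d, ℓ ∈ ℤ^d, and (σ,j) ≠ (σ',j') ∈ {−1,+1}×ℤ_{≥0}; write D := σj² − σ'j'². Let m, ϱ, ϱ' : Λ → ℝ satisfy |m(λ) − 1| ≤ 1/6 and |ϱ(λ)| + |ϱ'(λ)| ≤ 1/2 for all λ ∈ Λ. If there exists λ ∈ Λ such that |i λ ω̄·ℓ − i m(λ) D + i(ϱ(λ) − ϱ'(λ))| < 2γ̃ |D| ⟨ℓ⟩^{−τ}, then |D| ≤ 8 |ω̄·ℓ|. -/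
/-- Localization of resonances: if `|m(λ)−1| ≤ 1/6`, `|ϱ(λ)|+|ϱ'(λ)| ≤ 1/2` on `Λ`,
`0 < γ̃ ≤ 1/24`, `(σ,j) ≠ (σ',j')`, and for some `λ ∈ Λ`
`|iλω̄·ℓ − i m(λ)D + i(ϱ(λ)−ϱ'(λ))| < 2γ̃|D|⟨ℓ⟩^{−τ}` with `D = σj²−σ'j'²`,
then `|D| ≤ 8|ω̄·ℓ|`. -/
theorem resonance_localization (d : ℕ) (hd : 1 ≤ d) (τ : ℝ) (hτ : 0 < τ)
    (γt : ℝ) (hγt : 0 < γt) (hγt' : γt ≤ 1 / 24)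
    (Λ : Set ℝ) (hΛ : Λ ⊆ Set.Icc (1 / 2 : ℝ) (3 / 2))
    (ωb : Fin d → ℝ) (ℓ : Fin d → ℤ)
    (σ σ' : ℤ) (hσ : σ = 1 ∨ σ = -1) (hσ' : σ' = 1 ∨ σ' = -1)
    (j j' : ℕ) (hne : (σ, j) ≠ (σ', j'))
    (m ϱ ϱ' : ℝ → ℝ)
    (hm : ∀ l ∈ Λ, |m l - 1| ≤ 1 / 6)
    (hϱ : ∀ l ∈ Λ, |ϱ l| + |ϱ' l| ≤ 1 / 2)
    (hex : ∃ l ∈ Λ,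
      |l * (∑ i, ωb i * (ℓ i : ℝ)) -
          m l * ((σ : ℝ) * (j : ℝ) ^ 2 - (σ' : ℝ) * (j' : ℝ) ^ 2) +
          (ϱ l - ϱ' l)| <
        2 * γt * |(σ : ℝ) * (j : ℝ) ^ 2 - (σ' : ℝ) * (j' : ℝ) ^ 2| /
          ((max 1 (Finset.univ.sup fun i => (ℓ i).natAbs) : ℕ) : ℝ) ^ τ) :
    |(σ : ℝ) * (j : ℝ) ^ 2 - (σ' : ℝ) * (j' : ℝ) ^ 2| ≤
      8 * |∑ i, ωb i * (ℓ i : ℝ)| := by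

  set S := ∑ i, ωb i * (ℓ i : ℝ) with hS
  set D : ℝ := (σ : ℝ) * (j : ℝ) ^ 2 - (σ' : ℝ) * (j' : ℝ) ^ 2 with hDdef
  obtain ⟨l, hlΛ, hlt⟩ := hex
  obtain ⟨hl1, hl2⟩ := hΛ hlΛ
  by_cases h0 : (σ * (j : ℤ) ^ 2 - σ' * (j' : ℤ) ^ 2 : ℤ) = 0
  · have hD0 : D = 0 := by
      have : ((σ * (j : ℤ) ^ 2 - σ' * (j' : ℤ) ^ 2 : ℤ) : ℝ) = D := by
        rw [hDdef]; push_cast; ring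
      rw [← this, h0]; norm_num
    rw [hD0]; rw [abs_zero]; positivity
  · have h1 : (1 : ℝ) ≤ |D| := by
      have : ((σ * (j : ℤ) ^ 2 - σ' * (j' : ℤ) ^ 2 : ℤ) : ℝ) = D := by
        rw [hDdef]; push_cast; ring
      rw [← this]
      rw [← Int.cast_abs]
      exact_mod_cast Int.one_le_abs h0
    set N : ℕ := max 1 (Finset.univ.sup fun i => (ℓ i).natAbs) with hN
    have hNpow : (1 : ℝ) ≤ (N : ℝ) ^ τ := by
      apply Real.one_le_rpow
      · exact_mod_cast Nat.one_le_iff_ne_zero.mpr (by positivity)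
      · exact hτ.le
    have hbound : 2 * γt * |D| / (N : ℝ) ^ τ ≤ |D| / 12 := by
      rw [div_le_iff₀ (by linarith)]
      have h2 : 2 * γt * |D| ≤ |D| / 12 := by nlinarith [abs_nonneg D]
      nlinarith [abs_nonneg D, h1]
    have key : |l * S - m l * D + (ϱ l - ϱ' l)| < |D| / 12 := lt_of_lt_of_le hlt hbound
    have hml := hm l hlΛ
    have hϱl := hϱ l hlΛ
    have hϱ1 : |ϱ l - ϱ' l| ≤ 1 / 2 :=
      (abs_sub (ϱ l) (ϱ' l)).trans hϱl
    have hmD : (5 / 6 : ℝ) * |D| ≤ |m l * D| := by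
      rw [abs_mul]
      have : (5 / 6 : ℝ) ≤ |m l| := by
        cases' abs_sub_le_iff.mp hml with a b
        cases' abs_cases (m l) with h h <;> linarith [h.1]
      nlinarith [abs_nonneg D]
    have htri : |m l * D| ≤ |l * S - m l * D + (ϱ l - ϱ' l)| + |l * S| + |ϱ l - ϱ' l| := by
      have := abs_sub (l * S - m l * D + (ϱ l - ϱ' l)) (l * S + (ϱ l - ϱ' l))
      have heq : (l * S - m l * D + (ϱ l - ϱ' l)) - (l * S + (ϱ l - ϱ' l)) = -(m l * D) := by ring
      rw [heq, abs_neg] at this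
      calc |m l * D| ≤ |l * S - m l * D + (ϱ l - ϱ' l)| + |l * S + (ϱ l - ϱ' l)| := this
        _ ≤ |l * S - m l * D + (ϱ l - ϱ' l)| + (|l * S| + |ϱ l - ϱ' l|) := by
            linarith [abs_add_le (l * S) (ϱ l - ϱ' l)]
        _ = _ := by ring
    have hlS : |l * S| ≤ (3 / 2) * |S| := by
      rw [abs_mul]
      have : |l| ≤ 3 / 2 := abs_le.mpr ⟨by linarith, hl2⟩
      nlinarith [abs_nonneg S]
    nlinarith [abs_nonneg S]
end
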